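/- arXiv:0912.2514 — 7 statements merged into one kernel-verified Lean document; each statement's English description precedes it below -/
import Mathlib

section
/- For a sofic shift X and any right-ray x⁺ = x₁x₂x₃… in X⁺, there exists n ∈ ℕ such that the predecessor set of the finite prefix x₁…x_k equals the predecessor set of the infinite right-ray x⁺ for all k ≥ n. -/
/-- The shift map on bi-infinite sequences. -/
def shiftZ {A : Type*} (p : ℤ → A) : ℤ → A := fun i => p (i + 1)

/-- Concatenation `y⁻x⁺` of a left-ray `y` (where `y 0` is the symbol at position `-1`,
`y 1` at position `-2`, …) and a right-ray `x` (where `x n` is the symbol at position `n`). -/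
def concat {A : Type*} (y x : ℕ → A) : ℤ → A :=
  fun i => if 0 ≤ i then x i.toNat else y (-(i + 1)).toNat

/-- The set of right-rays `X⁺` of `X`. -/
def Xplus {A : Type*} (X : Set (ℤ → A)) : Set (ℕ → A) := {x | ∃ y, concat y x ∈ X}

/-- The set of left-rays `X⁻` of `X`. -/
def Xminus {A : Type*} (X : Set (ℤ → A)) : Set (ℕ → A) := {y | ∃ x, concat y x ∈ X}

/-- The predecessor set `P_∞(x⁺)` of a right-ray. -/
def Pray {A : Type*} (X : Set (ℤ → A)) (x : ℕ → A) : Set (ℕ → A) := {y | concat y x ∈ X}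

/-- Append a finite word at the (right) end of a left-ray: the word sits closest to the origin. -/
def leftAppend {A : Type*} (y : ℕ → A) (w : List A) : ℕ → A :=
  fun n => if h : n < w.length then w.reverse.get ⟨n, by simpa using h⟩ else y (n - w.length)

/-- The predecessor set `P_∞(w)` of a finite word: left-rays `y⁻` with `y⁻w ∈ X⁻`. -/
def Pword {A : Type*} (X : Set (ℤ → A)) (w : List A) : Set (ℕ → A) :=
  {y | leftAppend y w ∈ Xminus X}

/-- The prefix `x₁…x_k` of a right-ray. -/
def rayPrefix {A : Type*} (x : ℕ → A) (k : ℕ) : List A := List.ofFn (fun i : Fin k => x i)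

/-- `X` is a shift space: it is cut out by a set of forbidden words. -/
def IsShiftSpace {A : Type*} (X : Set (ℤ → A)) : Prop :=
  ∃ F : Set (List A),
    X = {p : ℤ → A | ∀ (i : ℤ) (n : ℕ), (List.ofFn fun j : Fin n => p (i + j)) ∉ F}

/-!
The prefix predecessor sets `Pword X (rayPrefix x k)` decrease in `k` and, since `X` is sofic,
take only finitely many values, so they are eventually constant. Their intersection is
`Pray X x`: a left-ray that precedes every prefix of `x⁺` precedes `x⁺` itself, because membership
in a shift space is decided by finite windows.
-/

theorem Antitone.exists_forall_ge_eq_iInf_of_finite_range {α : Type*} [CompleteLattice α]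
    {f : ℕ → α} (hf : Antitone f) (hfin : (Set.range f).Finite) :
    ∃ n, ∀ k ≥ n, f k = ⨅ i, f i := by
  obtain ⟨_, ⟨n, rfl⟩, hmin⟩ := hfin.exists_minimal (Set.range_nonempty f)
  have hstab : ∀ k ≥ n, f k = f n := fun k hk => le_antisymm (hf hk) (hmin ⟨k, rfl⟩ (hf hk))
  refine ⟨n, fun k hk => le_antisymm (le_iInf fun i => ?_) (iInf_le f k)⟩
  calc f k = f (max i k) := by rw [hstab k hk, hstab _ (hk.trans (le_max_right i k))]
    _ ≤ f i := hf (le_max_left i k)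

namespace IsShiftSpace

variable {A : Type*} {X : Set (ℤ → A)}

lemma shift_mem (hX : IsShiftSpace X) {p : ℤ → A} (hp : p ∈ X) (m : ℤ) :
    (fun i => p (m + i)) ∈ X := by
  obtain ⟨F, rfl⟩ := hX
  intro i n
  simpa [add_assoc] using hp (m + i) n

lemma mem_of_forall_exists_eqOn_Iio (hX : IsShiftSpace X) {p : ℤ → A}
    (h : ∀ N : ℤ, ∃ q ∈ X, ∀ s < N, q s = p s) : p ∈ X := by
  obtain ⟨F, rfl⟩ := hX
  intro i m
  obtain ⟨q, hq, hqp⟩ := h (i + m)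
  have hwindow : (List.ofFn fun j : Fin m => p (i + j)) = List.ofFn fun j : Fin m => q (i + j) :=
    congrArg _ (funext fun j => (hqp _ (by omega)).symm)
  exact hwindow ▸ hq i m

end IsShiftSpace

section Predecessors

variable {A : Type*}

lemma concat_leftAppend_rayPrefix_of_neg (y x z : ℕ → A) (k : ℕ) {s : ℤ} (hs : s < 0) :
    concat (leftAppend y (rayPrefix x k)) z s = concat y x (s + k) := by
  have hs' : ¬ (0 : ℤ) ≤ s := by omega
  simp only [concat, leftAppend, rayPrefix, hs', if_false, List.length_ofFn]
  by_cases hk : (-(s + 1)).toNat < k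
  · rw [dif_pos hk, if_pos (by omega)]
    simp only [List.get_eq_getElem, List.getElem_reverse, List.getElem_ofFn, List.length_ofFn]
    congr 1
    omega
  · rw [dif_neg hk, if_neg (by omega)]
    congr 1
    omega

variable {X : Set (ℤ → A)}

lemma pray_subset_pword_rayPrefix (hX : IsShiftSpace X) (x : ℕ → A) (k : ℕ) :
    Pray X x ⊆ Pword X (rayPrefix x k) := by
  intro y hy
  refine ⟨fun n => x (k + n), ?_⟩
  have heq : concat (leftAppend y (rayPrefix x k)) (fun n => x (k + n))
      = fun i : ℤ => concat y x (k + i) := by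
    funext i
    by_cases hi : (0 : ℤ) ≤ i
    · simp only [concat, if_pos hi, if_pos (show (0 : ℤ) ≤ k + i by omega)]
      congr 1
      omega
    · rw [concat_leftAppend_rayPrefix_of_neg y x _ k (by omega), add_comm]
  exact heq ▸ hX.shift_mem hy k

lemma antitone_pword_rayPrefix (hX : IsShiftSpace X) (x : ℕ → A) :
    Antitone fun k => Pword X (rayPrefix x k) := by
  intro k l hkl y ⟨z, hz⟩
  set q : ℤ → A := concat (leftAppend y (rayPrefix x l)) z with hq
  refine ⟨fun n => q ((k : ℤ) - l + n), ?_⟩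
  have heq : concat (leftAppend y (rayPrefix x k)) (fun n => q ((k : ℤ) - l + n))
      = fun i : ℤ => q ((k : ℤ) - l + i) := by
    funext i
    by_cases hi : (0 : ℤ) ≤ i
    · simp only [concat, if_pos hi]
      congr 1
      omega
    · rw [concat_leftAppend_rayPrefix_of_neg y x _ k (by omega), hq,
        concat_leftAppend_rayPrefix_of_neg y x z l (by omega)]
      congr 1
      ring
  exact heq ▸ hX.shift_mem hz _

lemma iInter_pword_rayPrefix (hX : IsShiftSpace X) (x : ℕ → A) :
    ⋂ k, Pword X (rayPrefix x k) = Pray X x := by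
  refine subset_antisymm (fun y hy => ?_) (Set.subset_iInter (pray_subset_pword_rayPrefix hX x))
  refine hX.mem_of_forall_exists_eqOn_Iio fun N => ?_
  obtain ⟨z, hz⟩ := Set.mem_iInter.mp hy N.toNat
  refine ⟨_, hX.shift_mem hz (-N.toNat), fun s hs => ?_⟩
  rw [concat_leftAppend_rayPrefix_of_neg y x z _ (by omega)]
  congr 1
  ring

end Predecessors

/-- For a sofic shift `X` (a shift space whose words have only finitely many
distinct predecessor sets) and any right-ray `x⁺ ∈ X⁺`, there is an `n` such that the predecessor
set of the prefix `x₁…x_k` equals the predecessor set of `x⁺` for all `k ≥ n`. -/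
theorem stmt0 {A : Type*} (X : Set (ℤ → A)) (hX : IsShiftSpace X)
    (hsofic : {P : Set (ℕ → A) | ∃ w : List A, P = Pword X w}.Finite) :
    ∀ x ∈ Xplus X, ∃ n : ℕ, ∀ k ≥ n, Pword X (rayPrefix x k) = Pray X x := by
  intro x _
  have hfin : (Set.range fun k => Pword X (rayPrefix x k)).Finite :=
    hsofic.subset (Set.range_subset_iff.mpr fun k => ⟨_, rfl⟩)
  obtain ⟨n, hn⟩ := (antitone_pword_rayPrefix hX x).exists_forall_ge_eq_iInf_of_finite_range hfin
  exact ⟨n, fun k hk => (hn k hk).trans (iInter_pword_rayPrefix hX x)⟩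
end

section
/- In the left Krieger cover of a sofic shift X, if P is a non-decomposable vertex (predecessor set), then the labelled subgraph induced by all vertices except P presents a strictly smaller language: there exist y⁻ ∈ X⁻ and x⁺ ∈ X⁺ with y⁻x⁺ ∈ X such that no presentation of y⁻ terminates at a vertex Q ≠ P with Q ⊆ P_∞(x⁺). Equivalently, P_∞(x⁺) is not contained in the union of the predecessor sets of the other vertices at which x⁺ has a presentation. -/
/-- The vertex set of the left Krieger cover: predecessor sets of right-rays of `X`. -/
def KrgV {A : Type*} (X : Set (ℤ → A)) : Set (Set (ℕ → A)) :=
  {P | ∃ x ∈ Xplus X, P = Pray X x}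

/-- A vertex `P` of the left Krieger cover is non-decomposable if whenever `P` is the union of a
family of vertices, `P` itself belongs to the family. -/
def NonDecomp {A : Type*} (X : Set (ℤ → A)) (P : Set (ℕ → A)) : Prop :=
  ∀ V : Set (Set (ℕ → A)), V ⊆ KrgV X → P = ⋃₀ V → P ∈ V

/-- Prepend a letter to a right-ray. -/
def consRay {A : Type*} (a : A) (x : ℕ → A) : ℕ → A :=
  fun n => if n = 0 then a else x (n - 1)

/-- There is an edge labelled `a` from `P` to `Q` in the left Krieger cover iff there is a
right-ray `x⁺ ∈ X⁺` with `P = P_∞(ax⁺)` and `Q = P_∞(x⁺)`. -/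
def KrgEdge {A : Type*} (X : Set (ℤ → A)) (a : A) (P Q : Set (ℕ → A)) : Prop :=
  ∃ x ∈ Xplus X, Pray X (consRay a x) = P ∧ Pray X x = Q

/-- The vertex set of the generalized left Fischer cover: vertices of the left Krieger cover
admitting a path to some non-decomposable vertex. -/
def GFC {A : Type*} (X : Set (ℤ → A)) : Set (Set (ℕ → A)) :=
  {P ∈ KrgV X | ∃ P' ∈ KrgV X, NonDecomp X P' ∧
    Relation.ReflTransGen (fun U W => ∃ a : A, KrgEdge X a U W) P P'}

theorem NonDecomp.exists_mem_forall_notMem {A : Type*} {X : Set (ℤ → A)}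
    {P : Set (ℕ → A)} (hnd : NonDecomp X P) :
    ∃ y ∈ P, ∀ Q ∈ KrgV X, Q ≠ P → Q ⊆ P → y ∉ Q := by
  by_contra! hcover
  have hunion : P = ⋃₀ {Q ∈ KrgV X | Q ≠ P ∧ Q ⊆ P} := by
    refine subset_antisymm (fun y hy => ?_) (Set.sUnion_subset fun Q hQ => hQ.2.2)
    obtain ⟨Q, hQ, hne, hsub, hyQ⟩ := hcover y hy
    exact ⟨Q, ⟨hQ, hne, hsub⟩, hyQ⟩
  exact (hnd _ (fun Q hQ => hQ.1) hunion).2.1 rfl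

theorem stmt5_general {A : Type*} (X : Set (ℤ → A))
    (P : Set (ℕ → A)) (hP : P ∈ KrgV X) (hnd : NonDecomp X P) :
    ∃ x ∈ Xplus X, ∃ y : ℕ → A, concat y x ∈ X ∧ Pray X x = P ∧
      ∀ Q ∈ KrgV X, Q ≠ P → Q ⊆ Pray X x → y ∉ Q := by
  obtain ⟨x, hx, rfl⟩ := hP
  obtain ⟨y, hy, hfree⟩ := hnd.exists_mem_forall_notMem
  exact ⟨x, hx, y, hy, rfl, hfree⟩

/-- If `P` is a non-decomposable vertex of the left Krieger cover of a sofic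
shift `X`, then removing `P` loses part of the language: there are `x⁺ ∈ X⁺` and
`y⁻ ∈ X⁻` with `y⁻x⁺ ∈ X` and `P = P_∞(x⁺)` such that `y⁻` lies in no vertex `Q ≠ P` with
`Q ⊆ P_∞(x⁺)` (the vertices at which a presentation of `y⁻x⁺` could survive). -/
theorem stmt5 {A : Type*} (X : Set (ℤ → A)) (hX : IsShiftSpace X)
    (hsofic : (KrgV X).Finite)
    (P : Set (ℕ → A)) (hP : P ∈ KrgV X) (hnd : NonDecomp X P) :
    ∃ x ∈ Xplus X, ∃ y : ℕ → A, concat y x ∈ X ∧ Pray X x = P ∧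
      ∀ Q ∈ KrgV X, Q ≠ P → Q ⊆ Pray X x → y ∉ Q :=
  stmt5_general X P hP hnd
end

section
/- Let X be a sofic shift with left Krieger cover (K, L_K). If there is an edge labelled a from a non-decomposable vertex P to a decomposable vertex Q, then there exists a non-decomposable vertex Q' and an edge labelled a from P to Q'. -/
/-
A left-ray `y` lies in `P_∞(ax⁺)` iff `ya` lies in `P_∞(x⁺)`, by shift invariance of `X`. So the
edge relation of the Krieger cover is monotone: if `P_∞(z⁺) ⊆ P_∞(x⁺)` then
`P_∞(az⁺) ⊆ P_∞(ax⁺)`. Since the cover is finite, every vertex, in particular `Q = P_∞(x⁺)`, is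
the union of the non-decomposable vertices `P_∞(z⁺)` it contains. Pulling this decomposition back
along `a` writes `P = P_∞(ax⁺)` as the union of the vertices `P_∞(az⁺)`; as `P` is
non-decomposable, it is one of them, and `a` labels an edge from `P` to the non-decomposable
`P_∞(z⁺)`.
-/

section

variable {A : Type*} {X : Set (ℤ → A)}

lemma IsShiftSpace.shiftZ_mem_iff (hX : IsShiftSpace X) (p : ℤ → A) :
    shiftZ p ∈ X ↔ p ∈ X := by
  obtain ⟨F, rfl⟩ := hX
  have window : ∀ (i : ℤ) (n : ℕ), (List.ofFn fun j : Fin n => shiftZ p (i + j)) =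
      List.ofFn fun j : Fin n => p (i + 1 + j) := by
    intro i n
    congr 1
    funext j
    simp only [shiftZ, add_right_comm]
  simp only [Set.mem_ofPred_eq, window]
  exact ⟨fun h i n => by simpa using h (i - 1) n, fun h i n => h (i + 1) n⟩

lemma concat_leftAppend_singleton (y z : ℕ → A) (a : A) :
    concat (leftAppend y [a]) z = shiftZ (concat y (consRay a z)) := by
  funext i
  have happend : ∀ n, leftAppend y [a] n = if n = 0 then a else y (n - 1) := by
    rintro (_ | n) <;> simp [leftAppend]
  simp only [concat, shiftZ, consRay, happend]
  split_ifs <;> first | rfl | (congr 1; omega)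

lemma IsShiftSpace.mem_Pray_consRay_iff (hX : IsShiftSpace X) {y z : ℕ → A} {a : A} :
    y ∈ Pray X (consRay a z) ↔ leftAppend y [a] ∈ Pray X z := by
  simp only [Pray, Set.mem_ofPred_eq, concat_leftAppend_singleton, hX.shiftZ_mem_iff]

lemma IsShiftSpace.Pray_consRay_mono (hX : IsShiftSpace X) (a : A) {z x : ℕ → A}
    (h : Pray X z ⊆ Pray X x) : Pray X (consRay a z) ⊆ Pray X (consRay a x) :=
  fun _ hy => hX.mem_Pray_consRay_iff.mpr (h (hX.mem_Pray_consRay_iff.mp hy))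

lemma exists_nonDecomp_mem_subset (hfin : (KrgV X).Finite) {Q : Set (ℕ → A)}
    (hQ : Q ∈ KrgV X) {y : ℕ → A} (hy : y ∈ Q) :
    ∃ R ∈ KrgV X, NonDecomp X R ∧ y ∈ R ∧ R ⊆ Q := by
  refine hfin.wellFoundedOn.induction (r := (· < ·))
    (P := fun Q => ∀ y ∈ Q, ∃ R ∈ KrgV X, NonDecomp X R ∧ y ∈ R ∧ R ⊆ Q) hQ
    (fun Q hQ ih y hy => ?_) y hy
  by_cases hnd : NonDecomp X Q
  · exact ⟨Q, hQ, hnd, hy, subset_rfl⟩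
  obtain ⟨V, hVsub, rfl, hQV⟩ : ∃ V ⊆ KrgV X, Q = ⋃₀ V ∧ Q ∉ V := by
    simpa [NonDecomp] using hnd
  obtain ⟨R, hRV, hyR⟩ := hy
  have hRQ : R ⊂ ⋃₀ V :=
    (Set.subset_sUnion_of_mem hRV).ssubset_of_ne fun h => hQV (h ▸ hRV)
  obtain ⟨S, hS, hSnd, hyS, hSR⟩ := ih R (hVsub hRV) hRQ y hyR
  exact ⟨S, hS, hSnd, hyS, hSR.trans hRQ.subset⟩

end

theorem stmt6_general {A : Type*} (X : Set (ℤ → A)) (hX : IsShiftSpace X)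
    (hsofic : (KrgV X).Finite)
    (P Q : Set (ℕ → A)) (a : A)
    (hPnd : NonDecomp X P)
    (hedge : KrgEdge X a P Q) :
    ∃ Q' ∈ KrgV X, NonDecomp X Q' ∧ KrgEdge X a P Q' := by
  obtain ⟨x, hx, rfl, rfl⟩ := hedge
  set V : Set (Set (ℕ → A)) := {S | ∃ z ∈ Xplus X, NonDecomp X (Pray X z) ∧
    Pray X z ⊆ Pray X x ∧ S = Pray X (consRay a z) ∧ S.Nonempty}
  have hVsub : V ⊆ KrgV X := by
    rintro S ⟨z, -, -, -, rfl, hS⟩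
    exact ⟨_, hS, rfl⟩
  have hV : Pray X (consRay a x) = ⋃₀ V := by
    refine subset_antisymm (fun y hy => ?_) (Set.sUnion_subset ?_)
    · obtain ⟨R, ⟨z, hz, rfl⟩, hnd, hyz, hzx⟩ :=
        exists_nonDecomp_mem_subset hsofic ⟨x, hx, rfl⟩
          (hX.mem_Pray_consRay_iff.mp hy)
      have hy' : y ∈ Pray X (consRay a z) := hX.mem_Pray_consRay_iff.mpr hyz
      exact ⟨_, ⟨z, hz, hnd, hzx, rfl, y, hy'⟩, hy'⟩
    · rintro S ⟨z, -, -, hzx, rfl, -⟩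
      exact hX.Pray_consRay_mono a hzx
  obtain ⟨z, hz, hnd, -, hPz, -⟩ := hPnd V hVsub hV
  exact ⟨Pray X z, ⟨z, hz, rfl⟩, hnd, z, hz, hPz.symm, rfl⟩

/-- In the left Krieger cover of a sofic shift, if there is an edge labelled `a`
from a non-decomposable vertex `P` to a decomposable vertex `Q`, then there is a
non-decomposable vertex `Q'` and an edge labelled `a` from `P` to `Q'`. -/
theorem stmt6 {A : Type*} (X : Set (ℤ → A)) (hX : IsShiftSpace X)
    (hsofic : (KrgV X).Finite)
    (P Q : Set (ℕ → A)) (a : A)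
    (hP : P ∈ KrgV X) (hPnd : NonDecomp X P)
    (hQ : Q ∈ KrgV X) (hQdec : ¬ NonDecomp X Q)
    (hedge : KrgEdge X a P Q) :
    ∃ Q' ∈ KrgV X, NonDecomp X Q' ∧ KrgEdge X a P Q' :=
  stmt6_general X hX hsofic P Q a hPnd hedge
end

section
/- The generalized left Fischer cover of a sofic shift is an essential labelled graph: every vertex emits at least one edge and receives at least one edge. -/
/-!
Shift invariance of `X` turns the predecessor set of `a x⁺` into the set of left-rays `y⁻`
with `y⁻a ∈ P_∞(x⁺)`; hence an `a`-labelled edge into a vertex `Q` always comes from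
`consRay a ⁻¹' Q`, and preimages commute with unions. Every vertex `P_∞(x⁺)` emits the edge
labelled by the first letter of `x⁺` and receives the edge labelled by the last letter of any
`y⁻ ∈ P_∞(x⁺)`. A vertex of the cover whose path to a non-decomposable vertex is nontrivial
leaves along the first edge of that path. A non-decomposable vertex `P` has some edge `P → Q`; by finiteness `Q` is the
union of the non-decomposable vertices it contains, so `P` is the union of their preimages and,
being non-decomposable, equals one of them. Finally, any vertex with an edge into the cover lies
in the cover.
-/
theorem IsShiftSpace.comp_add_mem {A : Type*} {X : Set (ℤ → A)} (hX : IsShiftSpace X)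
    {p : ℤ → A} (hp : p ∈ X) (k : ℤ) : (fun i => p (i + k)) ∈ X := by
  obtain ⟨F, rfl⟩ := hX
  intro i n
  simpa only [add_right_comm _ k] using hp (i + k) n

theorem IsShiftSpace.comp_add_mem_iff {A : Type*} {X : Set (ℤ → A)} (hX : IsShiftSpace X)
    (p : ℤ → A) (k : ℤ) : (fun i => p (i + k)) ∈ X ↔ p ∈ X :=
  ⟨fun h => by simpa using hX.comp_add_mem h (-k), fun h => hX.comp_add_mem h k⟩

theorem concat_consRay {A : Type*} (a : A) (y x : ℕ → A) :
    concat y (consRay a x) = fun i => concat (consRay a y) x (i + -1) := by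
  funext i
  simp only [concat, consRay]
  split_ifs <;> first | rfl | (congr 1; omega)

theorem consRay_head_tail {A : Type*} (x : ℕ → A) : consRay (x 0) (fun n => x (n + 1)) = x := by
  funext n
  cases n <;> rfl

theorem Pray_consRay {A : Type*} {X : Set (ℤ → A)} (hX : IsShiftSpace X) (a : A) (x : ℕ → A) :
    Pray X (consRay a x) = consRay a ⁻¹' Pray X x := by
  ext y
  change concat y (consRay a x) ∈ X ↔ concat (consRay a y) x ∈ X
  rw [concat_consRay]
  exact hX.comp_add_mem_iff _ _

theorem tail_mem_Xplus {A : Type*} {X : Set (ℤ → A)} (hX : IsShiftSpace X)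
    {x : ℕ → A} (hx : x ∈ Xplus X) : (fun n => x (n + 1)) ∈ Xplus X := by
  obtain ⟨y, hy⟩ := hx
  have hy' : y ∈ Pray X (consRay (x 0) fun n => x (n + 1)) := by
    rwa [consRay_head_tail]
  rw [Pray_consRay hX] at hy'
  exact ⟨_, hy'⟩

theorem preimage_consRay_mem_KrgV {A : Type*} {X : Set (ℤ → A)} (hX : IsShiftSpace X) (a : A)
    {Q : Set (ℕ → A)} (hQ : Q ∈ KrgV X) (hne : (consRay a ⁻¹' Q).Nonempty) :
    consRay a ⁻¹' Q ∈ KrgV X := by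
  obtain ⟨x, -, rfl⟩ := hQ
  rw [← Pray_consRay hX] at hne ⊢
  exact ⟨consRay a x, hne, rfl⟩

theorem krgEdge_iff {A : Type*} {X : Set (ℤ → A)} (hX : IsShiftSpace X) (a : A)
    (P Q : Set (ℕ → A)) : KrgEdge X a P Q ↔ Q ∈ KrgV X ∧ P = consRay a ⁻¹' Q := by
  constructor
  · rintro ⟨x, hx, rfl, rfl⟩
    exact ⟨⟨x, hx, rfl⟩, Pray_consRay hX a x⟩
  · rintro ⟨⟨x, hx, rfl⟩, rfl⟩
    exact ⟨x, hx, Pray_consRay hX a x, rfl⟩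

theorem KrgEdge.target_mem {A : Type*} {X : Set (ℤ → A)} {a : A} {P Q : Set (ℕ → A)}
    (h : KrgEdge X a P Q) : Q ∈ KrgV X := by
  obtain ⟨x, hx, -, rfl⟩ := h
  exact ⟨x, hx, rfl⟩

theorem exists_krgEdge_from {A : Type*} {X : Set (ℤ → A)} (hX : IsShiftSpace X)
    {P : Set (ℕ → A)} (hP : P ∈ KrgV X) : ∃ a Q, KrgEdge X a P Q := by
  obtain ⟨x, hx, rfl⟩ := hP
  refine ⟨x 0, _, _, tail_mem_Xplus hX hx, ?_, rfl⟩
  rw [consRay_head_tail]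

theorem exists_krgEdge_into {A : Type*} {X : Set (ℤ → A)} (hX : IsShiftSpace X)
    {P : Set (ℕ → A)} (hP : P ∈ KrgV X) : ∃ a, ∃ R ∈ KrgV X, KrgEdge X a R P := by
  obtain ⟨x, ⟨y, hy⟩, rfl⟩ := hP
  have hne : (consRay (y 0) ⁻¹' Pray X x).Nonempty :=
    ⟨fun n => y (n + 1), by rwa [Set.mem_preimage, consRay_head_tail]⟩
  exact ⟨y 0, _, preimage_consRay_mem_KrgV hX _ ⟨x, ⟨y, hy⟩, rfl⟩ hne,
    (krgEdge_iff hX _ _ _).2 ⟨⟨x, ⟨y, hy⟩, rfl⟩, rfl⟩⟩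

theorem sUnion_nonDecomp_subset {A : Type*} {X : Set (ℤ → A)} (hfin : (KrgV X).Finite)
    {P : Set (ℕ → A)} (hP : P ∈ KrgV X) :
    ⋃₀ {Q ∈ KrgV X | NonDecomp X Q ∧ Q ⊆ P} = P := by
  refine (hfin.wellFoundedOn (r := (· ⊂ ·))).induction hP
    (P := fun P => ⋃₀ {Q ∈ KrgV X | NonDecomp X Q ∧ Q ⊆ P} = P) fun P hP ih => ?_
  refine Set.Subset.antisymm (Set.sUnion_subset fun Q hQ => hQ.2.2) ?_
  by_cases hnd : NonDecomp X P
  · exact Set.subset_sUnion_of_mem ⟨hP, hnd, le_rfl⟩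
  obtain ⟨V, hVK, rfl, hPV⟩ : ∃ V ⊆ KrgV X, P = ⋃₀ V ∧ P ∉ V := by
    simpa [NonDecomp] using hnd
  refine Set.sUnion_subset fun Q hQ => ?_
  have hQP : Q ⊂ ⋃₀ V :=
    (Set.subset_sUnion_of_mem hQ).ssubset_of_ne fun h => hPV (h ▸ hQ)
  rw [← ih Q (hVK hQ) hQP]
  exact Set.sUnion_mono fun R hR => ⟨hR.1, hR.2.1, hR.2.2.trans hQP.subset⟩

theorem NonDecomp.exists_krgEdge_nonDecomp {A : Type*} {X : Set (ℤ → A)} (hX : IsShiftSpace X)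
    (hfin : (KrgV X).Finite) {a : A} {P Q : Set (ℕ → A)} (hP : NonDecomp X P)
    (he : KrgEdge X a P Q) : ∃ Q' ∈ KrgV X, NonDecomp X Q' ∧ KrgEdge X a P Q' := by
  obtain ⟨hQ, rfl⟩ := (krgEdge_iff hX a P Q).1 he
  set N := {Q' ∈ KrgV X | NonDecomp X Q' ∧ Q' ⊆ Q}
  set W := {R ∈ KrgV X | ∃ Q' ∈ N, R = consRay a ⁻¹' Q'}
  have hW : consRay a ⁻¹' Q = ⋃₀ W := by
    refine Set.Subset.antisymm (fun y hy => ?_) (Set.sUnion_subset fun R ⟨_, Q', hQ', hR⟩ =>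
      hR ▸ Set.preimage_mono hQ'.2.2)
    rw [← sUnion_nonDecomp_subset hfin hQ] at hy
    obtain ⟨Q', hQ', hyQ'⟩ := hy
    exact ⟨_, ⟨preimage_consRay_mem_KrgV hX a hQ'.1 ⟨y, hyQ'⟩, Q', hQ', rfl⟩, hyQ'⟩
  obtain ⟨-, Q', hQ', hPQ'⟩ := hP W (fun R hR => hR.1) hW
  exact ⟨Q', hQ'.1, hQ'.2.1, (krgEdge_iff hX a _ _).2 ⟨hQ'.1, hPQ'⟩⟩

theorem mem_GFC_of_nonDecomp {A : Type*} {X : Set (ℤ → A)} {P : Set (ℕ → A)}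
    (hP : P ∈ KrgV X) (hnd : NonDecomp X P) : P ∈ GFC X :=
  ⟨hP, P, hP, hnd, .refl⟩

theorem mem_GFC_of_krgEdge {A : Type*} {X : Set (ℤ → A)} {a : A} {P Q : Set (ℕ → A)}
    (hP : P ∈ KrgV X) (he : KrgEdge X a P Q) (hQ : Q ∈ GFC X) : P ∈ GFC X :=
  let ⟨_, P', hP', hnd, hpath⟩ := hQ
  ⟨hP, P', hP', hnd, .head ⟨a, he⟩ hpath⟩

/-- The generalized left Fischer cover of a sofic shift is essential: every
vertex emits an edge into the cover and receives an edge from the cover. -/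
theorem stmt7 {A : Type*} (X : Set (ℤ → A)) (hX : IsShiftSpace X)
    (hsofic : (KrgV X).Finite) :
    ∀ P ∈ GFC X,
      (∃ (a : A) (Q : Set (ℕ → A)), Q ∈ GFC X ∧ KrgEdge X a P Q) ∧
      (∃ (a : A) (Q : Set (ℕ → A)), Q ∈ GFC X ∧ KrgEdge X a Q P) := by
  intro P hP
  refine ⟨?_, ?_⟩
  · obtain ⟨hPK, P', hP'K, hP'nd, hpath⟩ := hP
    rcases hpath.cases_head with rfl | ⟨Q, ⟨a, he⟩, hQP'⟩
    · obtain ⟨a, Q, he⟩ := exists_krgEdge_from hX hPK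
      obtain ⟨Q', hQ'K, hQ'nd, he'⟩ := hP'nd.exists_krgEdge_nonDecomp hX hsofic he
      exact ⟨a, Q', mem_GFC_of_nonDecomp hQ'K hQ'nd, he'⟩
    · exact ⟨a, Q, ⟨he.target_mem, P', hP'K, hP'nd, hQP'⟩, he⟩
  · obtain ⟨a, R, hRK, he⟩ := exists_krgEdge_into hX hP.1
    exact ⟨a, R, mem_GFC_of_krgEdge hRK he hP, he⟩
end

section
/- The generalized left Fischer cover of a sofic shift X is a presentation of X: every left-ray y⁻ ∈ X⁻ is the label of some left-infinite path in the generalized left Fischer cover. -/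
/-! A left-ray `y` lying in some vertex lies in a `⊆`-minimal vertex containing it, and such a
vertex is non-decomposable because one of the pieces of any decomposition must contain `y`.
Starting from a right-ray `w` whose predecessor set is that vertex, the vertices
`P_∞(y (n - 1) ⋯ y 0 w)` form a left-infinite path labelled `y` that ends at the non-decomposable
vertex `P_∞(w)`, so all of them lie in the generalized left Fischer cover. -/

theorem Relation.ReflTransGen.of_rel_succ {α : Type*} {r : α → α → Prop} {f : ℕ → α}
    (h : ∀ n, r (f (n + 1)) (f n)) (n : ℕ) : Relation.ReflTransGen r (f n) (f 0) := by
  induction n with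
  | zero => exact .refl
  | succ n ih => exact .head (h n) ih

section

variable {A : Type*} {X : Set (ℤ → A)}

theorem IsShiftSpace.mem_of_shiftZ_mem (hX : IsShiftSpace X) {p : ℤ → A} (h : shiftZ p ∈ X) :
    p ∈ X := by
  obtain ⟨F, rfl⟩ := hX
  intro i n
  convert h (i - 1) n using 4 with j
  congr 1
  ring

theorem concat_eq_shiftZ_concat_consRay (y w : ℕ → A) :
    concat y w = shiftZ (concat (fun k => y (k + 1)) (consRay (y 0) w)) := by
  funext i
  simp only [shiftZ, concat, consRay]
  rcases lt_trichotomy i (-1) with h | rfl | h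
  · rw [if_neg (by omega), if_neg (by omega)]
    congr 1
    omega
  · simp
  · rw [if_pos (by omega), if_pos (by omega), if_neg (by omega)]
    congr 1
    omega

theorem IsShiftSpace.concat_consRay_mem (hX : IsShiftSpace X) {y w : ℕ → A}
    (h : concat y w ∈ X) : concat (fun k => y (k + 1)) (consRay (y 0) w) ∈ X :=
  hX.mem_of_shiftZ_mem (concat_eq_shiftZ_concat_consRay y w ▸ h)

def consPrefix (y w : ℕ → A) : ℕ → ℕ → A
  | 0 => w
  | n + 1 => consRay (y n) (consPrefix y w n)

theorem IsShiftSpace.concat_consPrefix_mem (hX : IsShiftSpace X) {y w : ℕ → A}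
    (h : concat y w ∈ X) (n : ℕ) : concat (fun k => y (k + n)) (consPrefix y w n) ∈ X := by
  induction n with
  | zero => exact h
  | succ n ih =>
    have := hX.concat_consRay_mem ih
    simp only [zero_add, add_right_comm _ 1 n] at this
    exact this

theorem exists_nonDecomp_mem_of_mem (hfin : (KrgV X).Finite) {P : Set (ℕ → A)}
    (hP : P ∈ KrgV X) {y : ℕ → A} (hy : y ∈ P) : ∃ Q ∈ KrgV X, NonDecomp X Q ∧ y ∈ Q := by
  obtain ⟨Q, hQ⟩ := (hfin.subset (Set.sep_subset (KrgV X) (y ∈ ·))).exists_minimal ⟨P, hP, hy⟩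
  refine ⟨Q, hQ.prop.1, fun V hV hQV => ?_, hQ.prop.2⟩
  obtain ⟨R, hRV, hyR⟩ : y ∈ ⋃₀ V := hQV ▸ hQ.prop.2
  have hRQ : R ⊆ Q := hQV ▸ Set.subset_sUnion_of_mem hRV
  rwa [← hQ.eq_of_le ⟨hV hRV, hyR⟩ hRQ]

end

/-- The generalized left Fischer cover of a sofic shift `X` is a presentation of
`X`: every left-ray `y⁻ ∈ X⁻` is the label of a left-infinite path in the generalized left
Fischer cover (the path `… → Ps (n+1) → Ps n → … → Ps 0` carries the letter `y n` on the edge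
from `Ps (n+1)` to `Ps n`). -/
theorem stmt8 {A : Type*} (X : Set (ℤ → A)) (hX : IsShiftSpace X)
    (hsofic : (KrgV X).Finite) :
    ∀ y ∈ Xminus X, ∃ Ps : ℕ → Set (ℕ → A),
      (∀ n, Ps n ∈ GFC X) ∧ (∀ n, KrgEdge X (y n) (Ps (n + 1)) (Ps n)) := by
  rintro y ⟨x, hx⟩
  obtain ⟨_, ⟨w, hw, rfl⟩, hnd, hyw⟩ := exists_nonDecomp_mem_of_mem hsofic ⟨x, ⟨y, hx⟩, rfl⟩ hx
  have hplus (n : ℕ) : consPrefix y w n ∈ Xplus X := ⟨_, hX.concat_consPrefix_mem hyw n⟩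
  have hedge (n : ℕ) :
      KrgEdge X (y n) (Pray X (consPrefix y w (n + 1))) (Pray X (consPrefix y w n)) :=
    ⟨_, hplus n, rfl, rfl⟩
  refine ⟨fun n => Pray X (consPrefix y w n), fun n => ?_, hedge⟩
  exact ⟨⟨_, hplus n, rfl⟩, _, ⟨w, hw, rfl⟩, hnd,
    Relation.ReflTransGen.of_rel_succ (f := fun n => Pray X (consPrefix y w n))
      (fun n => ⟨y n, hedge n⟩) n⟩
end

section
/- If a sofic shift X has the property that the left Krieger cover equals the maximal essential subgraph of the past set cover, then X satisfies Condition (*). -/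
/-- The language `B(X)` of `X`: words occurring (at position 0) in some point of `X`. -/
def Blang {A : Type*} (X : Set (ℤ → A)) : Set (List A) :=
  {w | ∃ p ∈ X, ∀ i : Fin w.length, p (i : ℕ) = w.get i}

/-- Prepend a finite word to a right-ray. -/
def wordRay {A : Type*} (w : List A) (x : ℕ → A) : ℕ → A :=
  fun n => if h : n < w.length then w.get ⟨n, h⟩ else x (n - w.length)

/-- `P_l(w)`: words of length at most `l` which can precede the word `w`. -/
def Pl {A : Type*} (X : Set (ℤ → A)) (l : ℕ) (w : List A) : Set (List A) :=
  {v | v.length ≤ l ∧ (v ++ w) ∈ Blang X}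

/-- `P_l(x⁺)`: words of length at most `l` which can precede the right-ray `x⁺`. -/
def PlRay {A : Type*} (X : Set (ℤ → A)) (l : ℕ) (x : ℕ → A) : Set (List A) :=
  {v | v.length ≤ l ∧ wordRay v x ∈ Xplus X}

/-- Condition (*) of Carlsen and Matsumoto. -/
def CondStar {A : Type*} (X : Set (ℤ → A)) : Prop :=
  ∀ (l : ℕ) (F : Set (List A)), F ⊆ Blang X → F.Infinite →
    (∀ u ∈ F, ∀ v ∈ F, Pl X l u = Pl X l v) →
    ∃ x ∈ Xplus X, ∀ w ∈ F, Pl X l w = PlRay X l x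

/-- The vertex set of the past set cover: predecessor sets of words of `X`. -/
def PscV {A : Type*} (X : Set (ℤ → A)) : Set (Set (ℕ → A)) :=
  {P | ∃ w ∈ Blang X, P = Pword X w}

/-- The edge labelled `a` from `P` to `Q` in the past set cover. -/
def PscEdge {A : Type*} (X : Set (ℤ → A)) (a : A) (P Q : Set (ℕ → A)) : Prop :=
  ∃ w ∈ Blang X, (a :: w) ∈ Blang X ∧ Pword X (a :: w) = P ∧ Pword X w = Q

/-- An essential subgraph of the past set cover: a set of vertices each of which emits an edge
into the set and receives an edge from the set. -/
def EssentialSub {A : Type*} (X : Set (ℤ → A)) (H : Set (Set (ℕ → A))) : Prop :=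
  H ⊆ PscV X ∧ ∀ P ∈ H,
    (∃ (a : A) (Q : Set (ℕ → A)), Q ∈ H ∧ PscEdge X a P Q) ∧
    (∃ (a : A) (Q : Set (ℕ → A)), Q ∈ H ∧ PscEdge X a Q P)

/-!
There are only finitely many predecessor sets, so by pigeonhole infinitely many words of `F`
share one predecessor set `P`. By hypothesis `P = P_∞(x⁺)` for a right-ray `x⁺`, so
`P_l(x⁺) = P_l(w₀)` for any such word `w₀`, and `P_l(w₀) = P_l(w)` for every `w ∈ F`.
-/

theorem Set.Infinite.exists_infinite_fiber_of_mapsTo {α β : Type*} {s : Set α} {t : Set β}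
    {f : α → β} (hs : s.Infinite) (hf : Set.MapsTo f s t) (ht : t.Finite) :
    ∃ b, {a | a ∈ s ∧ f a = b}.Infinite := by
  by_contra! h
  refine hs (Set.Finite.subset (ht.biUnion fun b _ => h b) fun a ha => ?_)
  exact Set.mem_biUnion (hf ha) ⟨ha, rfl⟩

theorem stmt15_general {A : Type*} (X : Set (ℤ → A))
    (hsofic : {P : Set (ℕ → A) | ∃ w : List A, P = Pword X w}.Finite)
    (hPl_ray : ∀ (l : ℕ) (w : List A) (x : ℕ → A), x ∈ Xplus X →
      Pword X w = Pray X x → Pl X l w = PlRay X l x)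
    (hmax : ∀ P : Set (ℕ → A), {w : List A | w ∈ Blang X ∧ Pword X w = P}.Infinite →
      ∃ x ∈ Xplus X, Pray X x = P) :
    CondStar X := by
  intro l F hFB hFinf hpair
  have hmaps : Set.MapsTo (Pword X) F {P | ∃ w : List A, P = Pword X w} := fun w _ => ⟨w, rfl⟩
  obtain ⟨P, hP⟩ := hFinf.exists_infinite_fiber_of_mapsTo hmaps hsofic
  obtain ⟨x, hx, hxP⟩ := hmax P (hP.mono fun w hw => ⟨hFB hw.1, hw.2⟩)
  obtain ⟨w₀, hw₀F, hw₀P⟩ := hP.nonempty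
  exact ⟨x, hx, fun w hw =>
    (hpair w hw w₀ hw₀F).trans (hPl_ray l w₀ x hx (hw₀P.trans hxP.symm))⟩

/-- If every vertex of the past set cover of a sofic shift `X` which is the
predecessor set of infinitely many words is a vertex of the left Krieger cover (i.e. the left
Krieger cover is the maximal essential subgraph of the past set cover), then `X` satisfies
Condition (*). -/
theorem stmt15 {A : Type*} (X : Set (ℤ → A)) (hX : IsShiftSpace X)
    (hsofic : {P : Set (ℕ → A) | ∃ w : List A, P = Pword X w}.Finite)
    (hPl_word : ∀ (l : ℕ) (u v : List A), Pword X u = Pword X v → Pl X l u = Pl X l v)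
    (hPl_ray : ∀ (l : ℕ) (w : List A) (x : ℕ → A), x ∈ Xplus X →
      Pword X w = Pray X x → Pl X l w = PlRay X l x)
    (hmax : ∀ P : Set (ℕ → A), {w : List A | w ∈ Blang X ∧ Pword X w = P}.Infinite →
      ∃ x ∈ Xplus X, Pray X x = P) :
    CondStar X :=
  stmt15_general X hsofic hPl_ray hmax
end

section
/- If the left Krieger cover of a sofic shift is a reducible directed graph (there exist two vertices u, v with no path from u to v), and the left Krieger cover is a foundation of the past set cover in the layered sense, then the past set cover is also reducible. -/
/-! A layer function that never decreases along edges is constant along any path between two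
vertices of the first layer, so such a path stays in the first layer, which is a copy of `K`.
Hence a path in `G(K, S, ∼)` between vertices of the first layer yields a path in `K`. -/

namespace Relation

variable {α β γ : Type*} {r : β → β → Prop}

theorem ReflTransGen.apply_le_apply [Preorder γ] {f : β → γ} (hf : ∀ a b, r a b → f a ≤ f b)
    {a b : β} (h : ReflTransGen r a b) : f a ≤ f b :=
  reflTransGen_le_of_le le_rfl _ _ (h.lift f hf)

theorem ReflTransGen.comap_of_forall_between_mem_range {p : α → α → Prop} {f : α → β}
    (hf : Function.Injective f) (hp : ∀ x y, r (f x) (f y) → p x y) {a b : α}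
    (h : ReflTransGen r (f a) (f b))
    (hmem : ∀ c, ReflTransGen r (f a) c → ReflTransGen r c (f b) → c ∈ Set.range f) :
    ReflTransGen p a b := by
  suffices key : ∀ c, ReflTransGen r c (f b) → ReflTransGen r (f a) c →
      ∀ x, f x = c → ReflTransGen p x b from key _ h .refl a rfl
  intro c hc
  induction hc using ReflTransGen.head_induction_on with
  | refl => rintro - x hx; rw [hf hx]
  | @head c d hcd hdb ih =>
    rintro hac x rfl
    obtain ⟨y, rfl⟩ := hmem d (hac.tail hcd) hdb
    exact .head (hp x y hcd) (ih (hac.tail hcd) y rfl)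

end Relation

theorem stmt16_general {VK VW : Type*} (adjK : VK → VK → Prop) (adjW : VW → VW → Prop)
    (layer : VW → ℕ)
    (hmono : ∀ u v : VW, adjW u v → layer u ≤ layer v)
    (ι : VK → VW) (hinj : Function.Injective ι)
    (hlayer : ∀ w : VW, layer w = 1 ↔ ∃ k : VK, ι k = w)
    (hedge : ∀ u v : VK, adjK u v ↔ adjW (ι u) (ι v))
    (hred : ¬ ∀ u v : VK, Relation.ReflTransGen adjK u v) :
    ¬ ∀ p q : VW, Relation.ReflTransGen adjW p q := by
  intro hall
  refine hred fun u v ↦ ?_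
  refine (hall (ι u) (ι v)).comap_of_forall_between_mem_range hinj (fun x y ↦ (hedge x y).2)
    fun c huc hcv ↦ ?_
  have hu : layer (ι u) = 1 := (hlayer _).2 ⟨u, rfl⟩
  have hv : layer (ι v) = 1 := (hlayer _).2 ⟨v, rfl⟩
  exact (hlayer c).1 <|
    le_antisymm (hv ▸ hcv.apply_le_apply hmono) (hu ▸ huc.apply_le_apply hmono)

/-- Suppose the past set cover `W` is layered over the left Krieger cover `K`:
there is a layer function on the vertices of `W` taking values `≥ 1` which never decreases along
edges, the first layer is (the image of) an embedded copy of `K`, and edges within the first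
layer correspond exactly to edges of `K`.  If `K` is reducible (some ordered pair of vertices is
not joined by a directed path), then `W` is reducible as well. -/
theorem stmt16 {VK VW : Type*} (adjK : VK → VK → Prop) (adjW : VW → VW → Prop)
    (layer : VW → ℕ) (hpos : ∀ w : VW, 1 ≤ layer w)
    (hmono : ∀ u v : VW, adjW u v → layer u ≤ layer v)
    (ι : VK → VW) (hinj : Function.Injective ι)
    (hlayer : ∀ w : VW, layer w = 1 ↔ ∃ k : VK, ι k = w)
    (hedge : ∀ u v : VK, adjK u v ↔ adjW (ι u) (ι v))
    (hred : ¬ ∀ u v : VK, Relation.ReflTransGen adjK u v) :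
    ¬ ∀ p q : VW, Relation.ReflTransGen adjW p q :=
  stmt16_general adjK adjW layer hmono ι hinj hlayer hedge hred
end
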